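/- arXiv:2208.11909 — 3 statements merged into one kernel-verified Lean document; each statement's English description precedes it below -/
import Mathlib

section
/- For every positive integer N, the truncated Schur Q-multiple zeta function of a one-row shape (r) decomposes as ζ_{(r)}^{Q,N}(s_1,...,s_r) = Σ_{ℓ} 2^{dep(ℓ)} ζ^N(ℓ), where ℓ ranges over all compositions obtained from (s_1,...,s_r) by replacing each of the r−1 separators by either a comma or a plus sign, dep(ℓ) is the number of parts of ℓ, and ζ^N denotes the truncated multiple zeta function ζ^N(t_1,...,t_k) = Σ_{0 < m_1 < ... < m_k ≤ N} m_1^{-t_1}···m_k^{-t_k}. -/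
noncomputable section

/-! Marked letters `{1' < 1 < 2' < 2 < ⋯}` are encoded by positive integer
ranks: `i' = 2i-1` (odd), `i = 2i` (even), `|rank| = (rank+1)/2`. -/

/-- Replace each separator of the index `(a, b_1, …, b_m)` by a comma
(`true`) or a plus (`false`), producing the resulting composition. -/
def fillIndex : ℂ → List (Bool × ℂ) → List ℂ
  | a, [] => [a]
  | a, (true, b) :: rest => a :: fillIndex b rest
  | a, (false, b) :: rest => fillIndex (a + b) rest

/-- Truncated multiple zeta value with summation starting at `lo`:
`∑_{lo ≤ m_1 < m_2 < ⋯ ≤ N} ∏ m_i^{-t_i}`. -/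
def zetaNfrom (N : ℕ) : ℕ → List ℂ → ℂ
  | _, [] => 1
  | lo, t :: rest => ∑ m ∈ Finset.Icc lo N, (m : ℂ) ^ (-t) * zetaNfrom N (m + 1) rest

/-- The truncated multiple zeta function
`ζ^N(t_1,…,t_k) = ∑_{0 < m_1 < ⋯ < m_k ≤ N} m_1^{-t_1} ⋯ m_k^{-t_k}`. -/
def zetaN (N : ℕ) (l : List ℂ) : ℂ := zetaNfrom N 1 l

/-- The truncated one-row Schur `Q`-multiple zeta function
`ζ_{(r)}^{Q,N}(s_1,…,s_r)`: the sum over one-row semi-standard marked shifted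
tableaux (weakly increasing sequences of marked letters `≤ N` with no repeated
primed letter) of `∏ |m_i|^{-s_i}`. -/
def zetaQrowN (N r : ℕ) (s : Fin r → ℂ) : ℂ :=
  ∑' M : {M : Fin r → ℕ // (∀ i, 1 ≤ M i ∧ M i ≤ 2 * N) ∧ Monotone M ∧
      (∀ i j, i ≠ j → M i = M j → ¬ Odd (M i))},
    ∏ i, ((((M.1 i + 1) / 2 : ℕ)) : ℂ) ^ (-(s i))

/-! Group the letters of a row by absolute value. A maximal block of letters of absolute value `j`
is `j' j ⋯ j` or `j j ⋯ j`, since `j'` cannot repeat, so every block has weight 2; the blocks are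
the parts of a composition `ℓ` obtained by merging adjacent `s_i` with `+`, and their strictly
increasing values give `ζ^N(ℓ)`. Both sides satisfy the same recursion in the first letter,
recorded by `rowTailSum`. -/

open Finset

def IsQRowFrom (N lo : ℕ) {r : ℕ} (M : Fin r → ℕ) : Prop :=
  (∀ i, lo ≤ M i ∧ M i ≤ 2 * N) ∧ Monotone M ∧
    (∀ i j, i ≠ j → M i = M j → ¬ Odd (M i))

-- `2 * ((m + 1) / 2)` is the rank of the unprimed letter `|m|`.
theorem two_mul_half_succ_le_iff {m x : ℕ} :
    2 * ((m + 1) / 2) ≤ x ↔ m ≤ x ∧ (Odd m → m ≠ x) := by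
  rcases Nat.even_or_odd m with ⟨k, rfl⟩ | ⟨k, rfl⟩ <;>
    simp [Nat.not_odd_iff_even.mpr] <;> omega

theorem isQRowFrom_cons_iff {N lo r m : ℕ} {M : Fin r → ℕ} :
    IsQRowFrom N lo (Fin.cons m M : Fin (r + 1) → ℕ) ↔
      m ∈ Icc lo (2 * N) ∧ IsQRowFrom N (2 * ((m + 1) / 2)) M := by
  simp only [IsQRowFrom, Monotone, Fin.forall_fin_succ, Fin.cons_zero, Fin.cons_succ,
    Fin.succ_le_succ_iff, Fin.zero_le, Fin.le_zero_iff, Fin.succ_ne_zero, ne_eq, Fin.succ_inj,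
    (Fin.succ_ne_zero _).symm, two_mul_half_succ_le_iff, mem_Icc, le_refl, true_implies,
    false_implies, not_true, not_false_eq_true, true_and, implies_true]
  constructor
  · rintro ⟨⟨hm, hM⟩, ⟨hmM, hmono⟩, hodd, hodd'⟩
    exact ⟨hm, fun i => ⟨⟨hmM i, fun ho he => hodd i he ho⟩, (hM i).2⟩, hmono,
      fun i => (hodd' i).2⟩
  · rintro ⟨hm, hM, hmono, hodd⟩
    exact ⟨⟨hm, fun i => ⟨hm.1.trans (hM i).1.1, (hM i).2⟩⟩, ⟨fun i => (hM i).1.1, hmono⟩,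
      fun i he ho => (hM i).1.2 ho he,
      fun i => ⟨fun he ho => (hM i).1.2 (he ▸ ho) he.symm, hodd i⟩⟩

instance (N lo r : ℕ) : Finite {M : Fin r → ℕ // IsQRowFrom N lo M} :=
  Finite.of_injective (fun M i => (⟨M.1 i, Nat.lt_succ_of_le (M.2.1 i).2⟩ : Fin (2 * N + 1)))
    fun _ _ h => Subtype.ext <| funext fun i => congrArg Fin.val (congrFun h i)

instance (N lo r : ℕ) : Fintype {M : Fin r → ℕ // IsQRowFrom N lo M} :=
  Fintype.ofFinite _

def qRowSum (N lo r : ℕ) (s : Fin r → ℂ) : ℂ :=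
  ∑ M : {M : Fin r → ℕ // IsQRowFrom N lo M}, ∏ i, (((M.1 i + 1) / 2 : ℕ) : ℂ) ^ (-(s i))

def qRowConsEquiv (N lo r : ℕ) :
    {M : Fin (r + 1) → ℕ // IsQRowFrom N lo M} ≃
      Σ m : Icc lo (2 * N), {M : Fin r → ℕ // IsQRowFrom N (2 * ((m.1 + 1) / 2)) M} where
  toFun M :=
    have h := isQRowFrom_cons_iff.mp ((Fin.cons_self_tail M.1).symm ▸ M.2)
    ⟨⟨M.1 0, h.1⟩, ⟨Fin.tail M.1, h.2⟩⟩
  invFun x := ⟨Fin.cons x.1.1 x.2.1, isQRowFrom_cons_iff.mpr ⟨x.1.2, x.2.2⟩⟩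
  left_inv M := Subtype.ext (Fin.cons_self_tail M.1)
  right_inv _ := rfl

theorem qRowSum_zero (N lo : ℕ) (s : Fin 0 → ℂ) : qRowSum N lo 0 s = 1 := by
  rw [qRowSum, Fintype.sum_subsingleton _ ⟨Fin.elim0, fun i => i.elim0, fun i => i.elim0,
    fun i => i.elim0⟩, Fin.prod_univ_zero]

theorem qRowSum_succ (N lo r : ℕ) (s : Fin (r + 1) → ℂ) :
    qRowSum N lo (r + 1) s = ∑ m ∈ Icc lo (2 * N),
      (((m + 1) / 2 : ℕ) : ℂ) ^ (-(s 0)) * qRowSum N (2 * ((m + 1) / 2)) r (Fin.tail s) := by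
  rw [qRowSum, ← (qRowConsEquiv N lo r).symm.sum_comp, Fintype.sum_sigma,
    ← sum_coe_sort (Icc lo (2 * N))]
  refine sum_congr rfl fun m _ => ?_
  rw [qRowSum, mul_sum]
  exact sum_congr rfl fun M _ => Fin.prod_univ_succ _

theorem sum_Icc_two_mul_sub_one_eq_sum_pairs {M : Type*} [AddCommMonoid M] (g : ℕ → M)
    {j : ℕ} (hj : 1 ≤ j) (N : ℕ) :
    ∑ m ∈ Icc (2 * j - 1) (2 * N), g m = ∑ k ∈ Icc j N, (g (2 * k - 1) + g (2 * k)) := by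
  induction N with
  | zero => rw [Icc_eq_empty (by omega), Icc_eq_empty (by omega), sum_empty, sum_empty]
  | succ N ih =>
    rcases le_or_gt j (N + 1) with hjN | hjN
    · rw [show 2 * (N + 1) = 2 * N + 1 + 1 by ring, sum_Icc_succ_top (by omega),
        sum_Icc_succ_top (by omega), ih, sum_Icc_succ_top hjN, add_assoc]
      rfl
    · rw [Icc_eq_empty (by omega), Icc_eq_empty (by omega), sum_empty, sum_empty]

theorem qRowSum_succ_of_odd (N r : ℕ) {j : ℕ} (hj : 1 ≤ j) (s : Fin (r + 1) → ℂ) :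
    qRowSum N (2 * j - 1) (r + 1) s =
      ∑ k ∈ Icc j N, 2 * (k : ℂ) ^ (-(s 0)) * qRowSum N (2 * k) r (Fin.tail s) := by
  rw [qRowSum_succ, sum_Icc_two_mul_sub_one_eq_sum_pairs _ hj]
  refine sum_congr rfl fun k hk => ?_
  have hk : 1 ≤ k := hj.trans (mem_Icc.mp hk).1
  rw [show (2 * k - 1 + 1) / 2 = k by omega, show (2 * k + 1) / 2 = k by omega]
  ring

theorem qRowSum_succ_of_even (N r : ℕ) {j : ℕ} (hj : j ≤ N) (s : Fin (r + 1) → ℂ) :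
    qRowSum N (2 * j) (r + 1) s =
      (j : ℂ) ^ (-(s 0)) * qRowSum N (2 * j) r (Fin.tail s) + qRowSum N (2 * j + 1) (r + 1) s := by
  rw [qRowSum_succ, qRowSum_succ, Icc_eq_cons_Ioc (by omega), sum_cons,
    ← Icc_add_one_left_eq_Ioc, show (2 * j + 1) / 2 = j by omega]

-- The contribution of the letters after a block of value `j`: each one either extends that block
-- as an unprimed `j` (weight 1) or opens a new block of value `m > j`, primed or not (weight 2).
def rowTailSum (N : ℕ) : List ℂ → ℕ → ℂ
  | [], _ => 1
  | b :: t, j => (j : ℂ) ^ (-b) * rowTailSum N t j +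
      ∑ m ∈ Icc (j + 1) N, 2 * (m : ℂ) ^ (-b) * rowTailSum N t m

theorem qRowSum_two_mul_eq_rowTailSum (N : ℕ) {r j : ℕ} (hj : j ≤ N) (s : Fin r → ℂ) :
    qRowSum N (2 * j) r s = rowTailSum N (List.ofFn s) j := by
  induction r generalizing j with
  | zero => rw [qRowSum_zero, List.ofFn_zero, rowTailSum]
  | succ r ih =>
    rw [qRowSum_succ_of_even N r hj, show 2 * j + 1 = 2 * (j + 1) - 1 by omega,
      qRowSum_succ_of_odd N r (by omega), List.ofFn_succ, rowTailSum, ih hj]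
    congr 1
    exact sum_congr rfl fun k hk => by rw [ih (mem_Icc.mp hk).2]; rfl

theorem sum_fillIndex_succ {M : Type*} [AddCommMonoid M] (f : List ℂ → M) {k : ℕ} (a : ℂ)
    (t : Fin (k + 1) → ℂ) :
    ∑ c : Fin (k + 1) → Bool, f (fillIndex a (List.ofFn fun i => (c i, t i))) =
      ∑ c : Fin k → Bool, (f (a :: fillIndex (t 0) (List.ofFn fun i => (c i, t i.succ))) +
        f (fillIndex (a + t 0) (List.ofFn fun i => (c i, t i.succ)))) := by
  rw [← (Fin.consEquiv fun _ => Bool).sum_comp, Fintype.sum_prod_type, Fintype.sum_bool,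
    ← sum_add_distrib]
  simp [List.ofFn_succ, Fin.consEquiv, fillIndex]

theorem sum_two_pow_length_mul_zetaNfrom (N : ℕ) {k j : ℕ} (hj : 1 ≤ j) (a : ℂ)
    (t : Fin k → ℂ) :
    ∑ c : Fin k → Bool,
        (2 : ℂ) ^ (fillIndex a (List.ofFn fun i => (c i, t i))).length *
          zetaNfrom N j (fillIndex a (List.ofFn fun i => (c i, t i))) =
      ∑ m ∈ Icc j N, 2 * (m : ℂ) ^ (-a) * rowTailSum N (List.ofFn t) m := by
  induction k generalizing j a with
  | zero =>
    simp only [Fintype.sum_unique, List.ofFn_zero, fillIndex, zetaNfrom, List.length_singleton,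
      rowTailSum, pow_one, mul_sum, mul_one]
  | succ k ih =>
    have comma : ∑ c : Fin k → Bool,
        (2 : ℂ) ^ (a :: fillIndex (t 0) (List.ofFn fun i => (c i, t i.succ))).length *
          zetaNfrom N j (a :: fillIndex (t 0) (List.ofFn fun i => (c i, t i.succ))) =
        ∑ m ∈ Icc j N, 2 * (m : ℂ) ^ (-a) *
          ∑ m' ∈ Icc (m + 1) N, 2 * (m' : ℂ) ^ (-t 0) *
            rowTailSum N (List.ofFn fun i => t i.succ) m' := by
      calc _ = ∑ m ∈ Icc j N, 2 * (m : ℂ) ^ (-a) * ∑ c : Fin k → Bool,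
              (2 : ℂ) ^ (fillIndex (t 0) (List.ofFn fun i => (c i, t i.succ))).length *
                zetaNfrom N (m + 1) (fillIndex (t 0) (List.ofFn fun i => (c i, t i.succ))) := by
            simp only [List.length_cons, zetaNfrom, mul_sum]
            rw [sum_comm]
            exact sum_congr rfl fun _ _ => sum_congr rfl fun _ _ => by ring
        _ = _ := sum_congr rfl fun m _ => by rw [ih (by omega)]
    have plus : ∑ c : Fin k → Bool,
        (2 : ℂ) ^ (fillIndex (a + t 0) (List.ofFn fun i => (c i, t i.succ))).length *
          zetaNfrom N j (fillIndex (a + t 0) (List.ofFn fun i => (c i, t i.succ))) =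
        ∑ m ∈ Icc j N, 2 * (m : ℂ) ^ (-a) *
          ((m : ℂ) ^ (-t 0) * rowTailSum N (List.ofFn fun i => t i.succ) m) := by
      rw [ih hj]
      refine sum_congr rfl fun m hm => ?_
      have hm : (m : ℂ) ≠ 0 := Nat.cast_ne_zero.mpr (by grind)
      rw [neg_add, Complex.cpow_add _ _ hm]
      ring
    rw [sum_fillIndex_succ (fun l => (2 : ℂ) ^ l.length * zetaNfrom N j l), sum_add_distrib,
      comma, plus, ← sum_add_distrib, List.ofFn_succ]
    refine sum_congr rfl fun m _ => ?_
    rw [rowTailSum]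
    ring

theorem zetaQrowN_eq_sum_zetaN_general (N n : ℕ) (s : Fin (n + 1) → ℂ) :
    zetaQrowN N (n + 1) s =
      ∑ c : Fin n → Bool,
        (2 : ℂ) ^ (fillIndex (s 0) (List.ofFn fun j : Fin n => (c j, s j.succ))).length *
          zetaN N (fillIndex (s 0) (List.ofFn fun j : Fin n => (c j, s j.succ))) := by
  calc zetaQrowN N (n + 1) s = qRowSum N (2 * 1 - 1) (n + 1) s :=
      tsum_fintype (L := .unconditional {M // IsQRowFrom N 1 M}) _
    _ = ∑ k ∈ Icc 1 N, 2 * (k : ℂ) ^ (-s 0) * rowTailSum N (List.ofFn (Fin.tail s)) k := by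
      rw [qRowSum_succ_of_odd N n le_rfl]
      exact sum_congr rfl fun k hk => by
        rw [qRowSum_two_mul_eq_rowTailSum N (mem_Icc.mp hk).2]
    _ = _ := (sum_two_pow_length_mul_zetaNfrom N le_rfl (s 0) (Fin.tail s)).symm

/-- **Decomposition of `ζ_{(r)}^{Q,N}` into truncated MZVs.**
`ζ_{(r)}^{Q,N}(s_1,…,s_r) = Σ_ℓ 2^{dep(ℓ)} ζ^N(ℓ)`, where `ℓ` ranges over all
compositions obtained from `(s_1,…,s_r)` by replacing each of the `r-1`
separators by a comma or a plus. -/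
theorem zetaQrowN_eq_sum_zetaN (N n : ℕ) (hN : 0 < N) (s : Fin (n + 1) → ℂ) :
    zetaQrowN N (n + 1) s =
      ∑ c : Fin n → Bool,
        (2 : ℂ) ^ (fillIndex (s 0) (List.ofFn fun j : Fin n => (c j, s j.succ))).length *
          zetaN N (fillIndex (s 0) (List.ofFn fun j : Fin n => (c j, s j.succ))) :=
  zetaQrowN_eq_sum_zetaN_general N n s
end
end

section
/- For every positive integer N and complex numbers a, b, the truncated symplectic Schur multiple zeta function of the column shape (1,1) satisfies ζ_{(1,1)}^{sp,N}(a,b) = ζ^N(a,b) + ζ^N(−a,−b) + ζ^N(−a,b) + ζ^N(a,−b) + ζ^N(a−b) − 1, where ζ^N(s,t) = Σ_{0<m_1<m_2≤N} m_1^{−s} m_2^{−t} and ζ^N(s) = Σ_{m=1}^N m^{−s}. -/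
noncomputable section

/-! The alphabet `[N̄] = {1 < 1̄ < 2 < 2̄ < ⋯ < N < N̄}` is encoded by ranks
`1,…,2N`: the letter `i` is `2i-1` (odd) and `ī` is `2i` (even); `|i| = i`,
`|ī| = i⁻¹`, and the base is `(rank+1)/2` in both cases.  For the orthogonal
alphabet `[N̄]^∞` the extra letter `∞` is encoded by `2N+1` and has `|∞| = 1`. -/

/-- The weight `|t|^{-a}` of the letter with rank `t`. -/
def spwt (t : ℕ) (a : ℂ) : ℂ :=
  if Odd t then ((((t + 1) / 2 : ℕ)) : ℂ) ^ (-a) else ((((t + 1) / 2 : ℕ)) : ℂ) ^ a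

/-- The weight of a letter of the orthogonal alphabet `[N̄]^∞`
(`∞` contributes `1`). -/
def sowt (N t : ℕ) (a : ℂ) : ℂ := if t = 2 * N + 1 then 1 else spwt t a

/-- The truncated zeta function `ζ^N(a) = ∑_{m=1}^N m^{-a}` (this is also
`ζ^{⋆,N}(a)`). -/
def zN (N : ℕ) (a : ℂ) : ℂ := ∑ m ∈ Finset.Icc 1 N, (m : ℂ) ^ (-a)

/-- The truncated double zeta function
`ζ^N(a,b) = ∑_{0 < m_1 < m_2 ≤ N} m_1^{-a} m_2^{-b}`. -/
def zN2 (N : ℕ) (a b : ℂ) : ℂ :=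
  ∑ p ∈ (Finset.Icc 1 N ×ˢ Finset.Icc 1 N).filter (fun p => p.1 < p.2),
    (p.1 : ℂ) ^ (-a) * (p.2 : ℂ) ^ (-b)

/-- The truncated double zeta star function
`ζ^{⋆,N}(a,b) = ∑_{0 < m_1 ≤ m_2 ≤ N} m_1^{-a} m_2^{-b}`. -/
def zS2 (N : ℕ) (a b : ℂ) : ℂ :=
  ∑ p ∈ (Finset.Icc 1 N ×ˢ Finset.Icc 1 N).filter (fun p => p.1 ≤ p.2),
    (p.1 : ℂ) ^ (-a) * (p.2 : ℂ) ^ (-b)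

lemma filter_succ (n : ℕ) (P : ℕ → Prop) [DecidablePred P] (g : ℕ → ℕ → ℂ) :
    ∑ p ∈ (Finset.Icc 1 (n+1) ×ˢ Finset.Icc 1 (n+1)).filter
        (fun p => p.1 < p.2 ∧ P p.2), g p.1 p.2
    = ∑ p ∈ (Finset.Icc 1 n ×ˢ Finset.Icc 1 n).filter
        (fun p => p.1 < p.2 ∧ P p.2), g p.1 p.2
      + if P (n+1) then ∑ t ∈ Finset.Icc 1 n, g t (n+1) else 0 := by
  classical
  by_cases hP : P (n+1)
  · rw [if_pos hP]
    have hset : (Finset.Icc 1 (n+1) ×ˢ Finset.Icc 1 (n+1)).filter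
        (fun p => p.1 < p.2 ∧ P p.2)
      = (Finset.Icc 1 n ×ˢ Finset.Icc 1 n).filter (fun p => p.1 < p.2 ∧ P p.2)
        ∪ (Finset.Icc 1 n).image (fun t => (t, n+1)) := by
      ext ⟨x, y⟩
      simp only [Finset.mem_filter, Finset.mem_product, Finset.mem_union,
        Finset.mem_image, Finset.mem_Icc, Prod.mk.injEq]
      constructor
      · rintro ⟨⟨⟨hx1, hx2⟩, hy1, hy2⟩, hlt, hPy⟩
        by_cases hy : y = n + 1
        · exact Or.inr ⟨x, ⟨hx1, by omega⟩, rfl, hy.symm⟩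
        · exact Or.inl ⟨⟨⟨hx1, by omega⟩, hy1, by omega⟩, hlt, hPy⟩
      · rintro (⟨⟨⟨hx1, hx2⟩, hy1, hy2⟩, hlt, hPy⟩ | ⟨t, ⟨ht1, ht2⟩, rfl, rfl⟩)
        · exact ⟨⟨⟨hx1, by omega⟩, hy1, by omega⟩, hlt, hPy⟩
        · exact ⟨⟨⟨ht1, by omega⟩, by omega, le_rfl⟩, by omega, hP⟩
    have hdisj : Disjoint
        ((Finset.Icc 1 n ×ˢ Finset.Icc 1 n).filter (fun p => p.1 < p.2 ∧ P p.2))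
        ((Finset.Icc 1 n).image (fun t => (t, n+1))) := by
      rw [Finset.disjoint_left]
      rintro ⟨x, y⟩ hmem hmem2
      simp only [Finset.mem_filter, Finset.mem_product, Finset.mem_Icc] at hmem
      simp only [Finset.mem_image, Finset.mem_Icc, Prod.mk.injEq] at hmem2
      obtain ⟨t, ht, rfl, rfl⟩ := hmem2
      omega
    rw [hset, Finset.sum_union hdisj,
      Finset.sum_image (fun x _ y _ h => by simpa using congrArg Prod.fst h)]
  · rw [if_neg hP, add_zero]
    congr 1
    ext ⟨x, y⟩
    simp only [Finset.mem_filter, Finset.mem_product, Finset.mem_Icc]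
    constructor
    · rintro ⟨⟨⟨hx1, hx2⟩, hy1, hy2⟩, hlt, hPy⟩
      have hy : y ≠ n + 1 := fun h => hP (h ▸ hPy)
      exact ⟨⟨⟨hx1, by omega⟩, hy1, by omega⟩, hlt, hPy⟩
    · rintro ⟨⟨⟨hx1, hx2⟩, hy1, hy2⟩, hlt, hPy⟩
      exact ⟨⟨⟨hx1, by omega⟩, hy1, by omega⟩, hlt, hPy⟩

lemma spwt_odd (m : ℕ) (c : ℂ) : spwt (2*m+1) c = ((m+1 : ℕ) : ℂ) ^ (-c) := by
  have h : Odd (2*m+1) := ⟨m, by ring⟩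
  simp only [spwt, if_pos h]
  congr 2
  omega

lemma spwt_even (m : ℕ) (c : ℂ) : spwt (2*m+2) c = ((m+1 : ℕ) : ℂ) ^ c := by
  have h : ¬ Odd (2*m+2) := by simp [Nat.odd_iff]
  simp only [spwt, if_neg h]
  congr 2
  omega

lemma zN_succ (n : ℕ) (c : ℂ) : zN (n+1) c = zN n c + ((n+1 : ℕ) : ℂ) ^ (-c) := by
  rw [zN, zN, Finset.sum_Icc_succ_top (by omega : 1 ≤ n+1)]

lemma spwt_row_sum (n : ℕ) (c : ℂ) :
    ∑ t ∈ Finset.Icc 1 (2*n), spwt t c = zN n c + zN n (-c) := by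
  induction n with
  | zero => simp [zN]
  | succ k ih =>
    have h2 : 2*(k+1) = (2*k+1)+1 := by ring
    rw [h2, Finset.sum_Icc_succ_top (by omega : 1 ≤ 2*k+1+1),
      Finset.sum_Icc_succ_top (by omega : 1 ≤ 2*k+1), ih,
      zN_succ, zN_succ, spwt_odd k c]
    have h3 : (2*k+1)+1 = 2*k+2 := rfl
    rw [h3, spwt_even k c, neg_neg]
    ring

lemma zN2_succ (n : ℕ) (s t : ℂ) :
    zN2 (n+1) s t = zN2 n s t + zN n s * ((n+1 : ℕ) : ℂ) ^ (-t) := by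
  have hrw : ∀ m : ℕ, (Finset.Icc 1 m ×ˢ Finset.Icc 1 m).filter (fun p => p.1 < p.2)
      = (Finset.Icc 1 m ×ˢ Finset.Icc 1 m).filter
        (fun p => p.1 < p.2 ∧ (fun _ : ℕ => True) p.2) := by
    intro m; simp
  rw [zN2, zN2, hrw, hrw,
    filter_succ n (fun _ => True) (fun x y => (x : ℂ) ^ (-s) * (y : ℂ) ^ (-t)),
    if_pos trivial, zN, Finset.sum_mul]


/-- **Column-shape symplectic Schur MZF.**  For every positive integer `N` and
`a, b ∈ ℂ`, the truncated symplectic Schur multiple zeta function of shape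
`(1,1)` — the sum over strictly increasing pairs `t_1 < t_2` of letters of
`[N̄]` with the symplectic condition `|t_2| ≥ 2` (rank `≥ 3`) of
`|t_1|^{-a} |t_2|^{-b}` — satisfies
`ζ_{(1,1)}^{sp,N}(a,b) = ζ^N(a,b) + ζ^N(-a,-b) + ζ^N(-a,b) + ζ^N(a,-b)
 + ζ^N(a-b) − 1`. -/
theorem zeta_sp_column (N : ℕ) (hN : 0 < N) (a b : ℂ) :
    ∑ p ∈ (Finset.Icc 1 (2 * N) ×ˢ Finset.Icc 1 (2 * N)).filter
        (fun p => p.1 < p.2 ∧ 3 ≤ p.2),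
      spwt p.1 a * spwt p.2 b =
    zN2 N a b + zN2 N (-a) (-b) + zN2 N (-a) b + zN2 N a (-b) + zN N (a - b) - 1 := by
  induction N with
  | zero => omega
  | succ n ih =>
    rcases Nat.eq_zero_or_pos n with hn | hn
    · subst hn
      have hempty : (Finset.Icc 1 (2*1) ×ˢ Finset.Icc 1 (2*1)).filter
          (fun p => p.1 < p.2 ∧ 3 ≤ p.2) = ∅ := by
        ext ⟨x, y⟩
        simp only [Finset.mem_filter, Finset.mem_product, Finset.mem_Icc,
          Finset.notMem_empty, iff_false]
        omega
      rw [hempty]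
      have h1 : ∀ s t : ℂ, zN2 1 s t = 0 := by
        intro s t
        rw [zN2]
        apply Finset.sum_eq_zero
        intro p hp
        simp only [Finset.mem_filter, Finset.mem_product, Finset.mem_Icc] at hp
        omega
      have h2 : zN 1 (a - b) = 1 := by
        rw [zN, Finset.Icc_self, Finset.sum_singleton]
        simp [Complex.one_cpow]
      rw [h1, h1, h1, h1, h2]
      simp
    · have h2 : 2*(n+1) = (2*n+1)+1 := by ring
      rw [h2, filter_succ (2*n+1) (fun t => 3 ≤ t) (fun x y => spwt x a * spwt y b),
        Finset.sum_Icc_succ_top (by omega : 1 ≤ 2*n+1),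
        filter_succ (2*n) (fun t => 3 ≤ t) (fun x y => spwt x a * spwt y b),
        if_pos (by omega : 3 ≤ 2*n+1), if_pos (by omega : 3 ≤ 2*n+1+1),
        ih hn]
      have h3 : (2*n+1)+1 = 2*n+2 := rfl
      rw [h3, spwt_odd n b, spwt_even n b, spwt_odd n a,
        ← Finset.sum_mul, ← Finset.sum_mul, spwt_row_sum,
        zN2_succ, zN2_succ, zN2_succ, zN2_succ, zN_succ]
      have hne : ((n+1 : ℕ) : ℂ) ≠ 0 := Nat.cast_ne_zero.mpr (Nat.succ_ne_zero n)
      have hab : ((n+1 : ℕ) : ℂ) ^ (-(a-b)) = ((n+1:ℕ):ℂ) ^ (-a) * ((n+1:ℕ):ℂ) ^ b := by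
        rw [neg_sub, sub_eq_add_neg, Complex.cpow_add _ _ hne]
        ring_nf
      rw [hab]
      ring
end
end

section
/- For the strict partition λ = (3,2,1) with skew part μ = (2), and variables constant along diagonals (s_{ij} = a_{j−i}), the truncated skew Schur Q-multiple zeta function satisfies for every N: ζ_{(3,2,1)/(2)}^{Q,N}(s) = −ζ_{(3,1)}^{Q,N}(a_0,a_1,a_2; a_0) + ζ_{(1)}^{Q,N}(a_2) · ζ_{(2,1)}^{Q,N}(a_0,a_1; a_0), where ζ_{(3,1)}^{Q,N} is the two-row shifted Schur Q-multiple zeta with first row entries (a_0,a_1,a_2) and second row entry (a_0), and ζ_{(2,1)}^{Q,N} analogously. -/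
noncomputable section

/-! Marked letters `ℕ' = {1' < 1 < 2' < 2 < ⋯}` are encoded by positive
integers (ranks): `i'` is `2i-1` (odd) and `i` is `2i` (even); the order on
`ℕ'` corresponds to the order of ranks, and `|i| = |i'| = i = (rank+1)/2`. -/

/-- The shifted (skew) diagram of a strict partition `λ` (given by `lam` on
`{0,…,r-1}`, rows 0-indexed) minus `μ`:
`SD = {(i,j) : i < r, μ_i + i ≤ j < λ_i + i}`. -/
def SDgen (r : ℕ) (lam mu : ℕ → ℕ) : Finset (ℕ × ℕ) :=
  (Finset.range r ×ˢ Finset.range ((Finset.range r).sup fun i => lam i + i)).filter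
    fun p => mu p.1 + p.1 ≤ p.2 ∧ p.2 < lam p.1 + p.1

/-- `M` is a semi-standard marked shifted tableau (of shape `λ/μ`): entries are
(ranks of) marked letters, weakly increasing along rows and columns, with at
most one `i'` in each row and at most one `i` in each column. -/
def IsQSST (r : ℕ) (lam mu : ℕ → ℕ)
    (M : {p : ℕ × ℕ // p ∈ SDgen r lam mu} → ℕ) : Prop :=
  (∀ p, 1 ≤ M p) ∧
  (∀ p q, p.1.1 = q.1.1 → p.1.2 + 1 = q.1.2 → M p ≤ M q) ∧
  (∀ p q, p.1.1 + 1 = q.1.1 → p.1.2 = q.1.2 → M p ≤ M q) ∧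
  (∀ p q, p.1.1 = q.1.1 → p ≠ q → M p = M q → ¬ Odd (M p)) ∧
  (∀ p q, p.1.2 = q.1.2 → p ≠ q → M p = M q → Odd (M p))

/-- The weight `1 / M^s = ∏_{(i,j)} |m_{ij}|^{-s_{ij}}`. -/
def Qwt (r : ℕ) (lam mu : ℕ → ℕ) (s : ℕ → ℕ → ℂ)
    (M : {p : ℕ × ℕ // p ∈ SDgen r lam mu} → ℕ) : ℂ :=
  ∏ p : {p : ℕ × ℕ // p ∈ SDgen r lam mu},
    ((((M p + 1) / 2 : ℕ)) : ℂ) ^ (-(s p.1.1 p.1.2))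

/-- Truncated Schur `Q`-multiple zeta function (entries at most `N`,
i.e. ranks at most `2N`). -/
def zetaQN (N r : ℕ) (lam mu : ℕ → ℕ) (s : ℕ → ℕ → ℂ) : ℂ :=
  ∑' M : {M : {p : ℕ × ℕ // p ∈ SDgen r lam mu} → ℕ //
      IsQSST r lam mu M ∧ ∀ p, M p ≤ 2 * N},
    Qwt r lam mu s M.1


def wgt (s : ℂ) (m : ℕ) : ℂ := ((((m + 1) / 2 : ℕ)) : ℂ) ^ (-s)

set_option linter.unnecessarySeqFocus false

/-! ## shape (1) -/

lemma hSD1 : SDgen 1 (fun _ => 1) (fun _ => 0) = {(0,0)} := by decide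

lemma m1a : ((0,0) : ℕ × ℕ) ∈ SDgen 1 (fun _ => 1) (fun _ => 0) := by rw [hSD1]; decide

lemma cells1 (p : {p : ℕ × ℕ // p ∈ SDgen 1 (fun _ => 1) (fun _ => 0)}) :
    p = ⟨(0,0), m1a⟩ := by
  obtain ⟨v, hv⟩ := p
  have hv' : v ∈ ({(0,0)} : Finset (ℕ × ℕ)) := by rw [← hSD1]; exact hv
  simp only [Finset.mem_singleton] at hv'
  subst hv'; exact Subtype.ext rfl

lemma z1 (N : ℕ) (a : ℕ → ℂ) :
    zetaQN N 1 (fun _ => 1) (fun _ => 0) (fun _ _ => a 2) =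
      ∑ x ∈ Finset.Icc 1 (2*N), wgt (a 2) x := by
  classical
  let e : {x : ℕ // x ∈ Finset.Icc 1 (2*N)} ≃
      {M : {p : ℕ × ℕ // p ∈ SDgen 1 (fun _ => 1) (fun _ => 0)} → ℕ //
        IsQSST 1 (fun _ => 1) (fun _ => 0) M ∧ ∀ p, M p ≤ 2 * N} :=
  { toFun := fun x =>
      ⟨fun _ => x.1, by
        have hx := Finset.mem_Icc.1 x.2
        refine ⟨⟨fun _ => hx.1, ?_, ?_, ?_, ?_⟩, fun _ => hx.2⟩
        · intro p q hr hc
          rcases cells1 p with rfl; rcases cells1 q with rfl; norm_num at hc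
        · intro p q hr hc
          rcases cells1 p with rfl; rcases cells1 q with rfl; norm_num at hr
        · intro p q hr hne heq
          rcases cells1 p with rfl; rcases cells1 q with rfl; exact absurd rfl hne
        · intro p q hc hne heq
          rcases cells1 p with rfl; rcases cells1 q with rfl; exact absurd rfl hne⟩,
    invFun := fun M =>
      ⟨M.1 ⟨(0,0), m1a⟩, Finset.mem_Icc.2 ⟨M.2.1.1 _, M.2.2 _⟩⟩,
    left_inv := fun x => by apply Subtype.ext; rfl,
    right_inv := fun M => by
      apply Subtype.ext
      funext p
      rcases cells1 p with rfl; rfl }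
  have step1 : zetaQN N 1 (fun _ => 1) (fun _ => 0) (fun _ _ => a 2) =
      ∑' x : {x : ℕ // x ∈ Finset.Icc 1 (2*N)}, wgt (a 2) x.1 := by
    rw [zetaQN, ← Equiv.tsum_eq e]
    refine tsum_congr fun x => ?_
    show Qwt 1 (fun _ => 1) (fun _ => 0) (fun _ _ => a 2) (fun _ => x.1) = _
    rw [Qwt]
    rw [Finset.prod_coe_sort (SDgen 1 (fun _ => 1) (fun _ => 0))
      (fun _ : ℕ × ℕ => ((((x.1 + 1) / 2 : ℕ)) : ℂ) ^ (-(a 2)))]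
    rw [hSD1, Finset.prod_singleton]
    rfl
  rw [step1, Finset.tsum_subtype (Finset.Icc 1 (2*N)) (fun x => wgt (a 2) x)]

/-! ## shape (2,1) -/

lemma hSD21 : SDgen 2 (fun i => 2 - i) (fun _ => 0) = {(0,0),(0,1),(1,1)} := by decide

lemma m21a : ((0,0) : ℕ × ℕ) ∈ SDgen 2 (fun i => 2 - i) (fun _ => 0) := by rw [hSD21]; decide
lemma m21b : ((0,1) : ℕ × ℕ) ∈ SDgen 2 (fun i => 2 - i) (fun _ => 0) := by rw [hSD21]; decide
lemma m21c : ((1,1) : ℕ × ℕ) ∈ SDgen 2 (fun i => 2 - i) (fun _ => 0) := by rw [hSD21]; decide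

lemma cells21 (p : {p : ℕ × ℕ // p ∈ SDgen 2 (fun i => 2 - i) (fun _ => 0)}) :
    p = ⟨(0,0), m21a⟩ ∨ p = ⟨(0,1), m21b⟩ ∨ p = ⟨(1,1), m21c⟩ := by
  obtain ⟨v, hv⟩ := p
  have hv' : v ∈ ({(0,0),(0,1),(1,1)} : Finset (ℕ × ℕ)) := by rw [← hSD21]; exact hv
  simp only [Finset.mem_insert, Finset.mem_singleton] at hv'
  rcases hv' with rfl | rfl | rfl
  · left; exact Subtype.ext rfl
  · right; left; exact Subtype.ext rfl
  · right; right; exact Subtype.ext rfl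

lemma z21 (N : ℕ) (a : ℕ → ℂ) :
    zetaQN N 2 (fun i => 2 - i) (fun _ => 0) (fun i j => a (j - i)) =
      ∑ t ∈ (Finset.Icc 1 (2*N) ×ˢ Finset.Icc 1 (2*N) ×ˢ Finset.Icc 1 (2*N)).filter
        (fun t => t.1 ≤ t.2.1 ∧ t.2.1 ≤ t.2.2 ∧ (t.1 = t.2.1 → ¬ Odd t.1) ∧
          (t.2.1 = t.2.2 → Odd t.2.1)),
        wgt (a 0) t.1 * wgt (a 1) t.2.1 * wgt (a 0) t.2.2 := by
  classical
  set F := (Finset.Icc 1 (2*N) ×ˢ Finset.Icc 1 (2*N) ×ˢ Finset.Icc 1 (2*N)).filter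
        (fun t : ℕ × ℕ × ℕ => t.1 ≤ t.2.1 ∧ t.2.1 ≤ t.2.2 ∧ (t.1 = t.2.1 → ¬ Odd t.1) ∧
          (t.2.1 = t.2.2 → Odd t.2.1)) with hF
  have memF : ∀ t : ℕ × ℕ × ℕ, t ∈ F ↔
      ((1 ≤ t.1 ∧ t.1 ≤ 2*N) ∧ (1 ≤ t.2.1 ∧ t.2.1 ≤ 2*N) ∧ (1 ≤ t.2.2 ∧ t.2.2 ≤ 2*N)) ∧
      (t.1 ≤ t.2.1 ∧ t.2.1 ≤ t.2.2 ∧ (t.1 = t.2.1 → ¬ Odd t.1) ∧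
          (t.2.1 = t.2.2 → Odd t.2.1)) := by
    intro t
    simp [hF, Finset.mem_filter, Finset.mem_product, Finset.mem_Icc, and_assoc]
  let e : {t : ℕ × ℕ × ℕ // t ∈ F} ≃
      {M : {p : ℕ × ℕ // p ∈ SDgen 2 (fun i => 2 - i) (fun _ => 0)} → ℕ //
        IsQSST 2 (fun i => 2 - i) (fun _ => 0) M ∧ ∀ p, M p ≤ 2 * N} :=
  { toFun := fun t =>
      ⟨fun p => if p.1.1 = 0 then (if p.1.2 = 0 then t.1.1 else t.1.2.1) else t.1.2.2, by
        obtain ⟨⟨⟨hu1, hu2⟩, ⟨hv1, hv2⟩, ⟨hw1, hw2⟩⟩, huv, hvw, hue, hvo⟩ := (memF t.1).1 t.2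
        clear memF hF
        simp only [Nat.odd_iff] at hue hvo
        refine ⟨⟨?_, ?_, ?_, ?_, ?_⟩, ?_⟩
        · intro p
          rcases cells21 p with rfl | rfl | rfl <;> norm_num <;> omega
        · intro p q hr hc
          rcases cells21 p with rfl | rfl | rfl <;> rcases cells21 q with rfl | rfl | rfl <;>
            (revert hr hc; norm_num) <;> omega
        · intro p q hr hc
          rcases cells21 p with rfl | rfl | rfl <;> rcases cells21 q with rfl | rfl | rfl <;>
            (revert hr hc; norm_num) <;> omega
        · intro p q hr hne heq
          simp only [Nat.odd_iff]
          rcases cells21 p with rfl | rfl | rfl <;> rcases cells21 q with rfl | rfl | rfl <;>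
            first
              | exact absurd rfl hne
              | ((revert hr heq; norm_num) <;> omega)
        · intro p q hc hne heq
          simp only [Nat.odd_iff]
          rcases cells21 p with rfl | rfl | rfl <;> rcases cells21 q with rfl | rfl | rfl <;>
            first
              | exact absurd rfl hne
              | ((revert hc heq; norm_num) <;> omega)
        · intro p
          rcases cells21 p with rfl | rfl | rfl <;> norm_num <;> omega⟩,
    invFun := fun M =>
      ⟨(M.1 ⟨(0,0), m21a⟩, M.1 ⟨(0,1), m21b⟩, M.1 ⟨(1,1), m21c⟩), by
        obtain ⟨⟨hge, hrow, hcol, hreq, hceq⟩, hbd⟩ := M.2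
        rw [memF]
        refine ⟨⟨⟨hge _, hbd _⟩, ⟨hge _, hbd _⟩, ⟨hge _, hbd _⟩⟩, ?_, ?_, ?_, ?_⟩
        · exact hrow ⟨(0,0), m21a⟩ ⟨(0,1), m21b⟩ rfl rfl
        · exact hcol ⟨(0,1), m21b⟩ ⟨(1,1), m21c⟩ rfl rfl
        · exact hreq ⟨(0,0), m21a⟩ ⟨(0,1), m21b⟩ rfl
            (fun hc => by have := congrArg (fun x => x.1.2) hc; simp at this)
        · exact hceq ⟨(0,1), m21b⟩ ⟨(1,1), m21c⟩ rfl
            (fun hc => by have := congrArg (fun x => x.1.1) hc; simp at this)⟩,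
    left_inv := fun t => by
      apply Subtype.ext
      simp,
    right_inv := fun M => by
      apply Subtype.ext
      funext p
      rcases cells21 p with rfl | rfl | rfl <;> simp }
  have step1 : zetaQN N 2 (fun i => 2 - i) (fun _ => 0) (fun i j => a (j - i)) =
      ∑' t : {t : ℕ × ℕ × ℕ // t ∈ F},
        wgt (a 0) t.1.1 * wgt (a 1) t.1.2.1 * wgt (a 0) t.1.2.2 := by
    rw [zetaQN, ← Equiv.tsum_eq e]
    refine tsum_congr fun t => ?_
    show Qwt 2 (fun i => 2 - i) (fun _ => 0) (fun i j => a (j - i))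
      (fun p => if p.1.1 = 0 then (if p.1.2 = 0 then t.1.1 else t.1.2.1) else t.1.2.2) = _
    rw [Qwt]
    rw [Finset.prod_coe_sort (SDgen 2 (fun i => 2 - i) (fun _ => 0))
      (fun q : ℕ × ℕ => (((((if q.1 = 0 then (if q.2 = 0 then t.1.1 else t.1.2.1) else t.1.2.2) + 1) / 2 : ℕ)) : ℂ) ^ (-(a (q.2 - q.1))))]
    rw [hSD21]
    rw [show ({(0,0),(0,1),(1,1)} : Finset (ℕ × ℕ)) = insert (0,0) (insert (0,1) {(1,1)}) from rfl]
    rw [Finset.prod_insert (by decide), Finset.prod_insert (by decide), Finset.prod_singleton]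
    norm_num [wgt, mul_assoc]
  rw [step1, Finset.tsum_subtype F (fun t => wgt (a 0) t.1 * wgt (a 1) t.2.1 * wgt (a 0) t.2.2)]

/-! ## shape (3,1), tuple order (R, P, Q, S) i.e. (x, u, v, d) -/

lemma hSD31 : SDgen 2 (fun i => if i = 0 then 3 else 1) (fun _ => 0) =
    {(0,0),(0,1),(0,2),(1,1)} := by decide

lemma m31a : ((0,0) : ℕ × ℕ) ∈ SDgen 2 (fun i => if i = 0 then 3 else 1) (fun _ => 0) := by
  rw [hSD31]; decide
lemma m31b : ((0,1) : ℕ × ℕ) ∈ SDgen 2 (fun i => if i = 0 then 3 else 1) (fun _ => 0) := by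
  rw [hSD31]; decide
lemma m31c : ((0,2) : ℕ × ℕ) ∈ SDgen 2 (fun i => if i = 0 then 3 else 1) (fun _ => 0) := by
  rw [hSD31]; decide
lemma m31d : ((1,1) : ℕ × ℕ) ∈ SDgen 2 (fun i => if i = 0 then 3 else 1) (fun _ => 0) := by
  rw [hSD31]; decide

lemma cells31 (p : {p : ℕ × ℕ // p ∈ SDgen 2 (fun i => if i = 0 then 3 else 1) (fun _ => 0)}) :
    p = ⟨(0,0), m31a⟩ ∨ p = ⟨(0,1), m31b⟩ ∨ p = ⟨(0,2), m31c⟩ ∨ p = ⟨(1,1), m31d⟩ := by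
  obtain ⟨v, hv⟩ := p
  have hv' : v ∈ ({(0,0),(0,1),(0,2),(1,1)} : Finset (ℕ × ℕ)) := by rw [← hSD31]; exact hv
  simp only [Finset.mem_insert, Finset.mem_singleton] at hv'
  rcases hv' with rfl | rfl | rfl | rfl
  · left; exact Subtype.ext rfl
  · right; left; exact Subtype.ext rfl
  · right; right; left; exact Subtype.ext rfl
  · right; right; right; exact Subtype.ext rfl

lemma z31 (N : ℕ) (a : ℕ → ℂ) :
    zetaQN N 2 (fun i => if i = 0 then 3 else 1) (fun _ => 0) (fun i j => a (j - i)) =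
      ∑ t ∈ (Finset.Icc 1 (2*N) ×ˢ Finset.Icc 1 (2*N) ×ˢ Finset.Icc 1 (2*N) ×ˢ
          Finset.Icc 1 (2*N)).filter
        (fun t => t.2.1 ≤ t.2.2.1 ∧ t.2.2.1 ≤ t.1 ∧ t.2.2.1 ≤ t.2.2.2 ∧
          (t.2.1 = t.2.2.1 → ¬ Odd t.2.1) ∧ (t.2.2.1 = t.1 → ¬ Odd t.2.2.1) ∧
          (t.2.2.1 = t.2.2.2 → Odd t.2.2.1)),
        wgt (a 0) t.2.1 * wgt (a 1) t.2.2.1 * wgt (a 2) t.1 * wgt (a 0) t.2.2.2 := by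
  classical
  set F := (Finset.Icc 1 (2*N) ×ˢ Finset.Icc 1 (2*N) ×ˢ Finset.Icc 1 (2*N) ×ˢ
          Finset.Icc 1 (2*N)).filter
        (fun t : ℕ × ℕ × ℕ × ℕ => t.2.1 ≤ t.2.2.1 ∧ t.2.2.1 ≤ t.1 ∧ t.2.2.1 ≤ t.2.2.2 ∧
          (t.2.1 = t.2.2.1 → ¬ Odd t.2.1) ∧ (t.2.2.1 = t.1 → ¬ Odd t.2.2.1) ∧
          (t.2.2.1 = t.2.2.2 → Odd t.2.2.1)) with hF
  have memF : ∀ t : ℕ × ℕ × ℕ × ℕ, t ∈ F ↔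
      ((1 ≤ t.1 ∧ t.1 ≤ 2*N) ∧ (1 ≤ t.2.1 ∧ t.2.1 ≤ 2*N) ∧ (1 ≤ t.2.2.1 ∧ t.2.2.1 ≤ 2*N) ∧
        (1 ≤ t.2.2.2 ∧ t.2.2.2 ≤ 2*N)) ∧
      (t.2.1 ≤ t.2.2.1 ∧ t.2.2.1 ≤ t.1 ∧ t.2.2.1 ≤ t.2.2.2 ∧
          (t.2.1 = t.2.2.1 → ¬ Odd t.2.1) ∧ (t.2.2.1 = t.1 → ¬ Odd t.2.2.1) ∧
          (t.2.2.1 = t.2.2.2 → Odd t.2.2.1)) := by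
    intro t
    simp [hF, Finset.mem_filter, Finset.mem_product, Finset.mem_Icc, and_assoc]
  let e : {t : ℕ × ℕ × ℕ × ℕ // t ∈ F} ≃
      {M : {p : ℕ × ℕ // p ∈ SDgen 2 (fun i => if i = 0 then 3 else 1) (fun _ => 0)} → ℕ //
        IsQSST 2 (fun i => if i = 0 then 3 else 1) (fun _ => 0) M ∧ ∀ p, M p ≤ 2 * N} :=
  { toFun := fun t =>
      ⟨fun p => if p.1.1 = 0 then
          (if p.1.2 = 0 then t.1.2.1 else if p.1.2 = 1 then t.1.2.2.1 else t.1.1)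
        else t.1.2.2.2, by
        obtain ⟨⟨⟨hx1, hx2⟩, ⟨hu1, hu2⟩, ⟨hv1, hv2⟩, ⟨hd1, hd2⟩⟩,
          huv, hvx, hvd, hue, hve, hvo⟩ := (memF t.1).1 t.2
        clear memF hF
        simp only [Nat.odd_iff] at hue hve hvo
        refine ⟨⟨?_, ?_, ?_, ?_, ?_⟩, ?_⟩
        · intro p
          rcases cells31 p with rfl | rfl | rfl | rfl <;> norm_num <;> omega
        · intro p q hr hc
          rcases cells31 p with rfl | rfl | rfl | rfl <;>
            rcases cells31 q with rfl | rfl | rfl | rfl <;>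
            (revert hr hc; norm_num) <;> omega
        · intro p q hr hc
          rcases cells31 p with rfl | rfl | rfl | rfl <;>
            rcases cells31 q with rfl | rfl | rfl | rfl <;>
            (revert hr hc; norm_num) <;> omega
        · intro p q hr hne heq
          simp only [Nat.odd_iff]
          rcases cells31 p with rfl | rfl | rfl | rfl <;>
            rcases cells31 q with rfl | rfl | rfl | rfl <;>
            first
              | exact absurd rfl hne
              | ((revert hr heq; norm_num) <;> omega)
        · intro p q hc hne heq
          simp only [Nat.odd_iff]
          rcases cells31 p with rfl | rfl | rfl | rfl <;>
            rcases cells31 q with rfl | rfl | rfl | rfl <;>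
            first
              | exact absurd rfl hne
              | ((revert hc heq; norm_num) <;> omega)
        · intro p
          rcases cells31 p with rfl | rfl | rfl | rfl <;> norm_num <;> omega⟩,
    invFun := fun M =>
      ⟨(M.1 ⟨(0,2), m31c⟩, M.1 ⟨(0,0), m31a⟩, M.1 ⟨(0,1), m31b⟩, M.1 ⟨(1,1), m31d⟩), by
        obtain ⟨⟨hge, hrow, hcol, hreq, hceq⟩, hbd⟩ := M.2
        rw [memF]
        refine ⟨⟨⟨hge _, hbd _⟩, ⟨hge _, hbd _⟩, ⟨hge _, hbd _⟩, ⟨hge _, hbd _⟩⟩,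
          ?_, ?_, ?_, ?_, ?_, ?_⟩
        · exact hrow ⟨(0,0), m31a⟩ ⟨(0,1), m31b⟩ rfl rfl
        · exact hrow ⟨(0,1), m31b⟩ ⟨(0,2), m31c⟩ rfl rfl
        · exact hcol ⟨(0,1), m31b⟩ ⟨(1,1), m31d⟩ rfl rfl
        · exact hreq ⟨(0,0), m31a⟩ ⟨(0,1), m31b⟩ rfl
            (fun hc => by have := congrArg (fun x => x.1.2) hc; simp at this)
        · exact hreq ⟨(0,1), m31b⟩ ⟨(0,2), m31c⟩ rfl
            (fun hc => by have := congrArg (fun x => x.1.2) hc; simp at this)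
        · exact hceq ⟨(0,1), m31b⟩ ⟨(1,1), m31d⟩ rfl
            (fun hc => by have := congrArg (fun x => x.1.1) hc; simp at this)⟩,
    left_inv := fun t => by
      apply Subtype.ext
      simp,
    right_inv := fun M => by
      apply Subtype.ext
      funext p
      rcases cells31 p with rfl | rfl | rfl | rfl <;> simp }
  have step1 : zetaQN N 2 (fun i => if i = 0 then 3 else 1) (fun _ => 0) (fun i j => a (j - i)) =
      ∑' t : {t : ℕ × ℕ × ℕ × ℕ // t ∈ F},
        wgt (a 0) t.1.2.1 * wgt (a 1) t.1.2.2.1 * wgt (a 2) t.1.1 * wgt (a 0) t.1.2.2.2 := by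
    rw [zetaQN, ← Equiv.tsum_eq e]
    refine tsum_congr fun t => ?_
    show Qwt 2 (fun i => if i = 0 then 3 else 1) (fun _ => 0) (fun i j => a (j - i))
      (fun p => if p.1.1 = 0 then
          (if p.1.2 = 0 then t.1.2.1 else if p.1.2 = 1 then t.1.2.2.1 else t.1.1)
        else t.1.2.2.2) = _
    rw [Qwt]
    rw [Finset.prod_coe_sort (SDgen 2 (fun i => if i = 0 then 3 else 1) (fun _ => 0))
      (fun q : ℕ × ℕ => (((((if q.1 = 0 then
          (if q.2 = 0 then t.1.2.1 else if q.2 = 1 then t.1.2.2.1 else t.1.1)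
        else t.1.2.2.2) + 1) / 2 : ℕ)) : ℂ) ^ (-(a (q.2 - q.1))))]
    rw [hSD31]
    rw [show ({(0,0),(0,1),(0,2),(1,1)} : Finset (ℕ × ℕ)) =
      insert (0,0) (insert (0,1) (insert (0,2) {(1,1)})) from rfl]
    rw [Finset.prod_insert (by decide), Finset.prod_insert (by decide),
      Finset.prod_insert (by decide), Finset.prod_singleton]
    norm_num [wgt, mul_assoc]
  rw [step1, Finset.tsum_subtype F (fun t =>
    wgt (a 0) t.2.1 * wgt (a 1) t.2.2.1 * wgt (a 2) t.1 * wgt (a 0) t.2.2.2)]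

/-! ## skew shape (3,2,1)/(2), tuple order (A, B, C, D) = (x, u, v, d) -/

lemma hSDsk : SDgen 3 (fun i => 3 - i) (fun i => if i = 0 then 2 else 0) =
    {(0,2),(1,1),(1,2),(2,2)} := by decide

lemma mska : ((0,2) : ℕ × ℕ) ∈ SDgen 3 (fun i => 3 - i) (fun i => if i = 0 then 2 else 0) := by
  rw [hSDsk]; decide
lemma mskb : ((1,1) : ℕ × ℕ) ∈ SDgen 3 (fun i => 3 - i) (fun i => if i = 0 then 2 else 0) := by
  rw [hSDsk]; decide
lemma mskc : ((1,2) : ℕ × ℕ) ∈ SDgen 3 (fun i => 3 - i) (fun i => if i = 0 then 2 else 0) := by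
  rw [hSDsk]; decide
lemma mskd : ((2,2) : ℕ × ℕ) ∈ SDgen 3 (fun i => 3 - i) (fun i => if i = 0 then 2 else 0) := by
  rw [hSDsk]; decide

lemma cellssk
    (p : {p : ℕ × ℕ // p ∈ SDgen 3 (fun i => 3 - i) (fun i => if i = 0 then 2 else 0)}) :
    p = ⟨(0,2), mska⟩ ∨ p = ⟨(1,1), mskb⟩ ∨ p = ⟨(1,2), mskc⟩ ∨ p = ⟨(2,2), mskd⟩ := by
  obtain ⟨v, hv⟩ := p
  have hv' : v ∈ ({(0,2),(1,1),(1,2),(2,2)} : Finset (ℕ × ℕ)) := by rw [← hSDsk]; exact hv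
  simp only [Finset.mem_insert, Finset.mem_singleton] at hv'
  rcases hv' with rfl | rfl | rfl | rfl
  · left; exact Subtype.ext rfl
  · right; left; exact Subtype.ext rfl
  · right; right; left; exact Subtype.ext rfl
  · right; right; right; exact Subtype.ext rfl

lemma zsk (N : ℕ) (a : ℕ → ℂ) :
    zetaQN N 3 (fun i => 3 - i) (fun i => if i = 0 then 2 else 0) (fun i j => a (j - i)) =
      ∑ t ∈ (Finset.Icc 1 (2*N) ×ˢ Finset.Icc 1 (2*N) ×ˢ Finset.Icc 1 (2*N) ×ˢ
          Finset.Icc 1 (2*N)).filter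
        (fun t => t.2.1 ≤ t.2.2.1 ∧ t.2.2.1 ≤ t.2.2.2 ∧ t.1 ≤ t.2.2.1 ∧
          (t.2.1 = t.2.2.1 → ¬ Odd t.2.1) ∧ (t.2.2.1 = t.2.2.2 → Odd t.2.2.1) ∧
          (t.1 = t.2.2.1 → Odd t.1)),
        wgt (a 2) t.1 * wgt (a 0) t.2.1 * wgt (a 1) t.2.2.1 * wgt (a 0) t.2.2.2 := by
  classical
  set F := (Finset.Icc 1 (2*N) ×ˢ Finset.Icc 1 (2*N) ×ˢ Finset.Icc 1 (2*N) ×ˢ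
          Finset.Icc 1 (2*N)).filter
        (fun t : ℕ × ℕ × ℕ × ℕ => t.2.1 ≤ t.2.2.1 ∧ t.2.2.1 ≤ t.2.2.2 ∧ t.1 ≤ t.2.2.1 ∧
          (t.2.1 = t.2.2.1 → ¬ Odd t.2.1) ∧ (t.2.2.1 = t.2.2.2 → Odd t.2.2.1) ∧
          (t.1 = t.2.2.1 → Odd t.1)) with hF
  have memF : ∀ t : ℕ × ℕ × ℕ × ℕ, t ∈ F ↔
      ((1 ≤ t.1 ∧ t.1 ≤ 2*N) ∧ (1 ≤ t.2.1 ∧ t.2.1 ≤ 2*N) ∧ (1 ≤ t.2.2.1 ∧ t.2.2.1 ≤ 2*N) ∧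
        (1 ≤ t.2.2.2 ∧ t.2.2.2 ≤ 2*N)) ∧
      (t.2.1 ≤ t.2.2.1 ∧ t.2.2.1 ≤ t.2.2.2 ∧ t.1 ≤ t.2.2.1 ∧
          (t.2.1 = t.2.2.1 → ¬ Odd t.2.1) ∧ (t.2.2.1 = t.2.2.2 → Odd t.2.2.1) ∧
          (t.1 = t.2.2.1 → Odd t.1)) := by
    intro t
    simp [hF, Finset.mem_filter, Finset.mem_product, Finset.mem_Icc, and_assoc]
  let e : {t : ℕ × ℕ × ℕ × ℕ // t ∈ F} ≃
      {M : {p : ℕ × ℕ // p ∈ SDgen 3 (fun i => 3 - i) (fun i => if i = 0 then 2 else 0)} → ℕ //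
        IsQSST 3 (fun i => 3 - i) (fun i => if i = 0 then 2 else 0) M ∧ ∀ p, M p ≤ 2 * N} :=
  { toFun := fun t =>
      ⟨fun p => if p.1.1 = 0 then t.1.1
        else if p.1.1 = 1 then (if p.1.2 = 1 then t.1.2.1 else t.1.2.2.1) else t.1.2.2.2, by
        obtain ⟨⟨⟨hx1, hx2⟩, ⟨hu1, hu2⟩, ⟨hv1, hv2⟩, ⟨hd1, hd2⟩⟩,
          huv, hvd, hxv, hue, hvo, hxo⟩ := (memF t.1).1 t.2
        clear memF hF
        simp only [Nat.odd_iff] at hue hvo hxo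
        refine ⟨⟨?_, ?_, ?_, ?_, ?_⟩, ?_⟩
        · intro p
          rcases cellssk p with rfl | rfl | rfl | rfl <;> norm_num <;> omega
        · intro p q hr hc
          rcases cellssk p with rfl | rfl | rfl | rfl <;>
            rcases cellssk q with rfl | rfl | rfl | rfl <;>
            (revert hr hc; norm_num) <;> omega
        · intro p q hr hc
          rcases cellssk p with rfl | rfl | rfl | rfl <;>
            rcases cellssk q with rfl | rfl | rfl | rfl <;>
            (revert hr hc; norm_num) <;> omega
        · intro p q hr hne heq
          simp only [Nat.odd_iff]
          rcases cellssk p with rfl | rfl | rfl | rfl <;>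
            rcases cellssk q with rfl | rfl | rfl | rfl <;>
            first
              | exact absurd rfl hne
              | ((revert hr heq; norm_num) <;> omega)
        · intro p q hc hne heq
          simp only [Nat.odd_iff]
          rcases cellssk p with rfl | rfl | rfl | rfl <;>
            rcases cellssk q with rfl | rfl | rfl | rfl <;>
            first
              | exact absurd rfl hne
              | ((revert hc heq; norm_num) <;> omega)
        · intro p
          rcases cellssk p with rfl | rfl | rfl | rfl <;> norm_num <;> omega⟩,
    invFun := fun M =>
      ⟨(M.1 ⟨(0,2), mska⟩, M.1 ⟨(1,1), mskb⟩, M.1 ⟨(1,2), mskc⟩, M.1 ⟨(2,2), mskd⟩), by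
        obtain ⟨⟨hge, hrow, hcol, hreq, hceq⟩, hbd⟩ := M.2
        rw [memF]
        refine ⟨⟨⟨hge _, hbd _⟩, ⟨hge _, hbd _⟩, ⟨hge _, hbd _⟩, ⟨hge _, hbd _⟩⟩,
          ?_, ?_, ?_, ?_, ?_, ?_⟩
        · exact hrow ⟨(1,1), mskb⟩ ⟨(1,2), mskc⟩ rfl rfl
        · exact hcol ⟨(1,2), mskc⟩ ⟨(2,2), mskd⟩ rfl rfl
        · exact hcol ⟨(0,2), mska⟩ ⟨(1,2), mskc⟩ rfl rfl
        · exact hreq ⟨(1,1), mskb⟩ ⟨(1,2), mskc⟩ rfl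
            (fun hc => by have := congrArg (fun x => x.1.2) hc; simp at this)
        · exact hceq ⟨(1,2), mskc⟩ ⟨(2,2), mskd⟩ rfl
            (fun hc => by have := congrArg (fun x => x.1.1) hc; simp at this)
        · exact hceq ⟨(0,2), mska⟩ ⟨(1,2), mskc⟩ rfl
            (fun hc => by have := congrArg (fun x => x.1.1) hc; simp at this)⟩,
    left_inv := fun t => by
      apply Subtype.ext
      simp,
    right_inv := fun M => by
      apply Subtype.ext
      funext p
      rcases cellssk p with rfl | rfl | rfl | rfl <;> simp }
  have step1 : zetaQN N 3 (fun i => 3 - i) (fun i => if i = 0 then 2 else 0)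
      (fun i j => a (j - i)) =
      ∑' t : {t : ℕ × ℕ × ℕ × ℕ // t ∈ F},
        wgt (a 2) t.1.1 * wgt (a 0) t.1.2.1 * wgt (a 1) t.1.2.2.1 * wgt (a 0) t.1.2.2.2 := by
    rw [zetaQN, ← Equiv.tsum_eq e]
    refine tsum_congr fun t => ?_
    show Qwt 3 (fun i => 3 - i) (fun i => if i = 0 then 2 else 0) (fun i j => a (j - i))
      (fun p => if p.1.1 = 0 then t.1.1
        else if p.1.1 = 1 then (if p.1.2 = 1 then t.1.2.1 else t.1.2.2.1) else t.1.2.2.2) = _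
    rw [Qwt]
    rw [Finset.prod_coe_sort (SDgen 3 (fun i => 3 - i) (fun i => if i = 0 then 2 else 0))
      (fun q : ℕ × ℕ => (((((if q.1 = 0 then t.1.1
        else if q.1 = 1 then (if q.2 = 1 then t.1.2.1 else t.1.2.2.1) else t.1.2.2.2)
          + 1) / 2 : ℕ)) : ℂ) ^ (-(a (q.2 - q.1))))]
    rw [hSDsk]
    rw [show ({(0,2),(1,1),(1,2),(2,2)} : Finset (ℕ × ℕ)) =
      insert (0,2) (insert (1,1) (insert (1,2) {(2,2)})) from rfl]
    rw [Finset.prod_insert (by decide), Finset.prod_insert (by decide),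
      Finset.prod_insert (by decide), Finset.prod_singleton]
    norm_num [wgt, mul_assoc]
  rw [step1, Finset.tsum_subtype F (fun t =>
    wgt (a 2) t.1 * wgt (a 0) t.2.1 * wgt (a 1) t.2.2.1 * wgt (a 0) t.2.2.2)]

/-! ## the key pointwise identity -/

lemma key_ite (x u v d : ℕ) (A B C D : ℂ) :
    (if (u ≤ v ∧ v ≤ d ∧ x ≤ v ∧ (u = v → ¬ Odd u) ∧ (v = d → Odd v) ∧ (x = v → Odd x))
      then A * B * C * D else 0) +
    (if (u ≤ v ∧ v ≤ x ∧ v ≤ d ∧ (u = v → ¬ Odd u) ∧ (v = x → ¬ Odd v) ∧ (v = d → Odd v))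
      then B * C * A * D else 0) =
    (if (u ≤ v ∧ v ≤ d ∧ (u = v → ¬ Odd u) ∧ (v = d → Odd v)) then A * (B * C * D) else 0) := by
  simp only [Nat.odd_iff]
  split_ifs <;> first | ring1 | (exfalso; omega)

/-- **Pfaffian expression for the skew shape `(3,2,1)/(2)`.**  For variables
constant along diagonals (`s_{ij} = a_{j-i}`) and every positive integer `N`,
`ζ_{(3,2,1)/(2)}^{Q,N} = − ζ_{(3,1)}^{Q,N}(a_0,a_1,a_2; a_0)
 + ζ_{(1)}^{Q,N}(a_2) · ζ_{(2,1)}^{Q,N}(a_0,a_1; a_0)`. -/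
theorem pfaffian_skew_321_2 (N : ℕ) (hN : 0 < N) (a : ℕ → ℂ) :
    zetaQN N 3 (fun i => 3 - i) (fun i => if i = 0 then 2 else 0)
        (fun i j => a (j - i)) =
      - zetaQN N 2 (fun i => if i = 0 then 3 else 1) (fun _ => 0)
          (fun i j => a (j - i)) +
      zetaQN N 1 (fun _ => 1) (fun _ => 0) (fun _ _ => a 2) *
        zetaQN N 2 (fun i => 2 - i) (fun _ => 0) (fun i j => a (j - i)) := by

  classical
  rw [zsk N a, z31 N a, z1 N a, z21 N a, Finset.sum_mul_sum]
  simp only [Finset.sum_filter, Finset.sum_product]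
  rw [neg_add_eq_sub, eq_sub_iff_add_eq]
  rw [← Finset.sum_add_distrib]
  refine Finset.sum_congr rfl fun x _ => ?_
  rw [← Finset.sum_add_distrib]
  refine Finset.sum_congr rfl fun u _ => ?_
  rw [← Finset.sum_add_distrib]
  refine Finset.sum_congr rfl fun v _ => ?_
  rw [← Finset.sum_add_distrib]
  refine Finset.sum_congr rfl fun d _ => ?_
  exact key_ite x u v d (wgt (a 2) x) (wgt (a 0) u) (wgt (a 1) v) (wgt (a 0) d)
end
end
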